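/- Let g: ℝ → ℝ be nondecreasing and left-continuous with Lebesgue–Stieltjes measure μ_g, V a real Banach space, and f: [0,T] → V a Bochner μ_g-integrable function of finite rank (i.e., the range of f spans a finite-dimensional subspace of V). Define F(t) = ∫_{[0,t)} f dμ_g ∈ V. Then there exists a μ_g-null set N ⊆ [0,T] such that F'_g(t) = f(t) in V for all t ∈ [0,T] \ N. -/

import Mathlib

/-!
The pseudo-inverse `φ y = sup {t ∈ [0, T] | g t ≤ y}` satisfies `a ≤ φ y ↔ g a ≤ y` by left
continuity of `g`, so it pushes Lebesgue measure on `[g 0, g T)` forward to `μ_g` on `[0, T)`,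
and `∫_{[u, s)} f dμ_g = ∫_{[g u, g s)} f ∘ φ`.

At a jump `t` of `g`, `F (t⁺) - F t = μ_g {t} • f t = (g (t⁺) - g t) • f t`. At a continuity
point `t < T` such that `g t` is a Lebesgue point of `f ∘ φ` and is not a value `g q`, `q ∈ ℚ`,
the function `g` is strictly increasing on both sides of `t`, `φ (g t) = t`, and the
`g`-difference quotients of `F` are averages of `f ∘ φ` over intervals shrinking to `g t`, so
they tend to `f t`. The other points are `μ_g`-null: off the jumps `g ∘ φ = id`, so a set of
continuity points that `g` maps into a Lebesgue-null set is `μ_g`-null.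
-/

open MeasureTheory Filter Set
open scoped Topology

def DSet (g : ℝ → ℝ) : Set ℝ := {t | g t < Function.rightLim g t}

/-- `F` has `g`-derivative `L` at `t` (relative to the set `A`): the usual Stieltjes
difference quotient limit at continuity points of `g`, and the jump quotient at
discontinuity points of `g`. -/
def HasDerivG {V : Type*} [NormedAddCommGroup V] [NormedSpace ℝ V]
    (g : ℝ → ℝ) (A : Set ℝ) (F : ℝ → V) (t : ℝ) (L : V) : Prop :=
  if g t < Function.rightLim g t then
    ∃ Fp : V, Filter.Tendsto F (nhdsWithin t (A ∩ Set.Ioi t)) (nhds Fp) ∧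
      L = (Function.rightLim g t - g t)⁻¹ • (Fp - F t)
  else
    Filter.Tendsto (fun s => (g s - g t)⁻¹ • (F s - F t)) (nhdsWithin t (A \ {t})) (nhds L)

section LebesguePoint

variable {V : Type*} [NormedAddCommGroup V] [NormedSpace ℝ V]

def IsIntervalLebesguePoint (f : ℝ → V) (y : ℝ) : Prop :=
  ∀ (l : Filter ℝ) (a b : ℝ → ℝ), Tendsto (fun s => b s - a s) l (𝓝[>] 0) →
    (∀ᶠ s in l, y ∈ Icc (a s) (b s)) →
    Tendsto (fun s => (b s - a s)⁻¹ • ∫ z in Ico (a s) (b s), f z) l (𝓝 (f y))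

theorem ae_isIntervalLebesguePoint [CompleteSpace V] {f : ℝ → V} (hf : LocallyIntegrable f) :
    ∀ᵐ y, IsIntervalLebesguePoint f y := by
  filter_upwards [IsUnifLocDoublingMeasure.ae_tendsto_average volume hf 1]
    with y hy l a b hab hmem
  have hlen := tendsto_nhdsWithin_iff.1 hab
  -- `[a, b]` is the closed ball of radius `(b - a) / 2` about its midpoint, and contains `y`.
  have hball := hy (fun s => (a s + b s) / 2) (fun s => (b s - a s) / 2)
    (tendsto_nhdsWithin_iff.2 ⟨by simpa using hlen.1.div_const 2,
      hlen.2.mono fun s hs => half_pos (mem_Ioi.1 hs)⟩)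
    (hmem.mono fun s hs => by
      rw [one_mul, Real.closedBall_eq_Icc]
      constructor <;> linarith [hs.1, hs.2])
  refine hball.congr' (hlen.2.mono fun s hs => ?_)
  have hs' : 0 < b s - a s := hs
  rw [Real.closedBall_eq_Icc, show (a s + b s) / 2 - (b s - a s) / 2 = a s by ring,
    show (a s + b s) / 2 + (b s - a s) / 2 = b s by ring, setAverage_eq,
    integral_Icc_eq_integral_Ico, measureReal_def, Real.volume_Icc,
    ENNReal.toReal_ofReal hs'.le]

end LebesguePoint

theorem Monotone.countable_DSet {g : ℝ → ℝ} (hg : Monotone g) : (DSet g).Countable := by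
  refine ((hg.monotoneOn univ).countable_not_continuousWithinAt_Ioi).mono fun t ht => ?_
  refine ⟨mem_univ t, fun hcont => ?_⟩
  rw [univ_inter, hg.continuousWithinAt_Ioi_iff_rightLim_eq] at hcont
  exact (ht : g t < _).ne' hcont

theorem Monotone.measure_singleton {g : ℝ → ℝ} (hg : Monotone g) {μ : Measure ℝ}
    (hμ : ∀ a b : ℝ, a ≤ b → μ (Ico a b) = ENNReal.ofReal (g b - g a)) (t : ℝ) :
    μ {t} = ENNReal.ofReal (Function.rightLim g t - g t) := by
  have hIco : Tendsto (fun s => μ (Ico t s)) (𝓝[>] t) (𝓝 (μ (⋂ s > t, Ico t s))) :=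
    tendsto_measure_biInter_gt (fun _ _ => measurableSet_Ico.nullMeasurableSet)
      (fun _ _ _ hij => Ico_subset_Ico_right hij)
      ⟨t + 1, by linarith, by rw [hμ t (t + 1) (by linarith)]; exact ENNReal.ofReal_ne_top⟩
  have hinter : (⋂ s > t, Ico t s) = {t} := by
    refine Subset.antisymm (fun x hx => ?_) fun x hx => ?_
    · simp only [mem_iInter, mem_Ico] at hx
      refine le_antisymm (not_lt.1 fun htx => ?_) (hx (t + 1) (by linarith)).1
      exact lt_irrefl x (hx x htx).2
    · simp only [mem_singleton_iff.1 hx, mem_iInter, mem_Ico]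
      exact fun s hs => ⟨le_rfl, hs⟩
  rw [hinter] at hIco
  refine tendsto_nhds_unique hIco (((ENNReal.continuous_ofReal.tendsto _).comp
    ((hg.tendsto_rightLim t).sub_const (g t))).congr' ?_)
  filter_upwards [self_mem_nhdsWithin] with s hs
  exact (hμ t s (le_of_lt hs)).symm

theorem Monotone.measure_singleton_diff_DSet {g : ℝ → ℝ} (hg : Monotone g) {μ : Measure ℝ}
    (hμ : ∀ a b : ℝ, a ≤ b → μ (Ico a b) = ENNReal.ofReal (g b - g a)) (t : ℝ) :
    μ ({t} \ DSet g) = 0 := by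
  by_cases ht : t ∈ DSet g
  · rw [sdiff_eq_empty.2 (singleton_subset_iff.2 ht), measure_empty]
  · refine measure_mono_null sdiff_subset ?_
    rw [hg.measure_singleton hμ, ENNReal.ofReal_eq_zero, sub_nonpos]
    exact not_lt.1 ht

theorem tendsto_setIntegral_Ico_nhdsGT {V : Type*} [NormedAddCommGroup V] [NormedSpace ℝ V]
    [CompleteSpace V] {μ : Measure ℝ} {f : ℝ → V} {t b : ℝ} (htb : t < b)
    (hf : IntegrableOn f (Ico t b) μ) :
    Tendsto (fun s => ∫ x in Ico t s, f x ∂μ) (𝓝[>] t) (𝓝 (μ.real {t} • f t)) := by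
  have hlim : Tendsto (fun s => ∫ x in Ico t b, (Ico t s).indicator f x ∂μ) (𝓝[>] t)
      (𝓝 (∫ x in Ico t b, ({t} : Set ℝ).indicator f x ∂μ)) := by
    refine tendsto_integral_filter_of_dominated_convergence (fun x => ‖f x‖)
      (Eventually.of_forall fun s => (hf.1.indicator measurableSet_Ico))
      (Eventually.of_forall fun s => Eventually.of_forall fun x => ?_) hf.norm
      (Eventually.of_forall fun x => ?_)
    · exact norm_indicator_le_norm_self _ _
    · rcases lt_trichotomy x t with hxt | rfl | htx
      · simp [indicator_of_notMem (show x ∉ Ico t _ from fun h => (h.1.trans_lt hxt).false),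
          hxt.ne]
      · refine tendsto_const_nhds.congr' ?_
        filter_upwards [self_mem_nhdsWithin] with s hs
        simp [indicator_of_mem (show x ∈ Ico x s from ⟨le_rfl, hs⟩)]
      · refine tendsto_const_nhds.congr' ?_
        filter_upwards [Ioo_mem_nhdsGT htx] with s hs
        simp [indicator_of_notMem (show x ∉ Ico t s from fun h => (h.2.trans hs.2).false),
          htx.ne']
  rw [integral_indicator (measurableSet_singleton t),
    Measure.restrict_restrict (measurableSet_singleton t),
    inter_eq_self_of_subset_left (singleton_subset_iff.2 (left_mem_Ico.2 htb)),
    integral_singleton] at hlim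
  refine hlim.congr' ?_
  filter_upwards [Ioo_mem_nhdsGT htb] with s hs
  rw [integral_indicator measurableSet_Ico, Measure.restrict_restrict measurableSet_Ico,
    inter_eq_self_of_subset_left (Ico_subset_Ico_right hs.2.le)]

theorem sub_eq_setIntegral_Ico {V : Type*} [NormedAddCommGroup V] [NormedSpace ℝ V]
    {μ : Measure ℝ} {f F : ℝ → V} {T : ℝ}
    (hf : IntegrableOn f (Icc 0 T) μ) (hF : ∀ t ∈ Icc 0 T, F t = ∫ s in Ico 0 t, f s ∂μ)
    {t s : ℝ} (ht : 0 ≤ t) (hts : t ≤ s) (hs : s ≤ T) :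
    F s - F t = ∫ x in Ico t s, f x ∂μ := by
  rw [hF s ⟨ht.trans hts, hs⟩, hF t ⟨ht, hts.trans hs⟩, ← Ico_union_Ico_eq_Ico ht hts,
    setIntegral_union Ico_disjoint_Ico_same measurableSet_Ico
      (hf.mono_set (Ico_subset_Icc_self.trans (Icc_subset_Icc_right (hts.trans hs))))
      (hf.mono_set (Ico_subset_Icc_self.trans (Icc_subset_Icc ht hs))), add_sub_cancel_left]

section PseudoInverse

variable {g : ℝ → ℝ} {T : ℝ}

-- Only the values on `[g 0, g T)` matter; below `g 0` the set is empty and `sSup ∅ = 0`.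
noncomputable def pseudoInv (g : ℝ → ℝ) (T y : ℝ) : ℝ := sSup {t ∈ Icc 0 T | g t ≤ y}

theorem bddAbove_pseudoInv_set (g : ℝ → ℝ) (T y : ℝ) :
    BddAbove {t ∈ Icc 0 T | g t ≤ y} :=
  ⟨T, fun _ ht => ht.1.2⟩

theorem monotone_pseudoInv (g : ℝ → ℝ) (T : ℝ) : Monotone (pseudoInv g T) := by
  intro y y' hyy'
  rcases eq_empty_or_nonempty {t ∈ Icc 0 T | g t ≤ y} with hempty | hne
  · rw [pseudoInv, hempty, Real.sSup_empty]
    exact Real.sSup_nonneg fun _ ht => ht.1.1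
  · exact csSup_le_csSup (bddAbove_pseudoInv_set g T y') hne
      fun t ht => ⟨ht.1, ht.2.trans hyy'⟩

theorem le_pseudoInv {a y : ℝ} (ha : a ∈ Icc 0 T) (hay : g a ≤ y) : a ≤ pseudoInv g T y :=
  le_csSup (bddAbove_pseudoInv_set g T y) ⟨ha, hay⟩

theorem pseudoInv_mem_Icc (hT : 0 ≤ T) {y : ℝ} (hy : g 0 ≤ y) : pseudoInv g T y ∈ Icc 0 T :=
  ⟨le_pseudoInv ⟨le_rfl, hT⟩ hy, csSup_le ⟨0, ⟨le_rfl, hT⟩, hy⟩ fun _ ht => ht.1.2⟩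

theorem apply_pseudoInv_le (hg : Monotone g) (hlc : ∀ t, ContinuousWithinAt g (Iio t) t)
    (hT : 0 ≤ T) {y : ℝ} (hy : g 0 ≤ y) : g (pseudoInv g T y) ≤ y := by
  have hne : {t ∈ Icc 0 T | g t ≤ y}.Nonempty := ⟨0, ⟨le_rfl, hT⟩, hy⟩
  refine le_of_tendsto (hlc _) (eventually_mem_nhdsWithin.mono fun s hs => ?_)
  obtain ⟨u, hu, hsu⟩ := exists_lt_of_lt_csSup hne hs
  exact (hg hsu.le).trans hu.2

theorem le_pseudoInv_iff (hg : Monotone g) (hlc : ∀ t, ContinuousWithinAt g (Iio t) t)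
    (hT : 0 ≤ T) {a y : ℝ} (ha : a ∈ Icc 0 T) (hy : g 0 ≤ y) :
    a ≤ pseudoInv g T y ↔ g a ≤ y :=
  ⟨fun h => (hg h).trans (apply_pseudoInv_le hg hlc hT hy), le_pseudoInv ha⟩

theorem mapsTo_pseudoInv (hg : Monotone g) (hlc : ∀ t, ContinuousWithinAt g (Iio t) t)
    (hT : 0 ≤ T) : MapsTo (pseudoInv g T) (Ico (g 0) (g T)) (Ico 0 T) := fun _ hy =>
  ⟨(pseudoInv_mem_Icc hT hy.1).1, lt_of_not_ge fun h =>
    (le_pseudoInv_iff hg hlc hT ⟨hT, le_rfl⟩ hy.1).1 h |>.not_gt hy.2⟩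

theorem preimage_pseudoInv_Ico (hg : Monotone g) (hlc : ∀ t, ContinuousWithinAt g (Iio t) t)
    (hT : 0 ≤ T) {a b : ℝ} (ha : a ∈ Icc 0 T) (hb : b ∈ Icc 0 T) :
    pseudoInv g T ⁻¹' Ico a b ∩ Ico (g 0) (g T) = Ico (g a) (g b) := by
  ext y
  simp only [mem_inter_iff, mem_preimage, mem_Ico]
  constructor
  · rintro ⟨⟨hay, hyb⟩, hy0, hyT⟩
    refine ⟨(le_pseudoInv_iff hg hlc hT ha hy0).1 hay, lt_of_not_ge fun h => ?_⟩
    exact hyb.not_ge ((le_pseudoInv_iff hg hlc hT hb hy0).2 h)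
  · rintro ⟨hay, hyb⟩
    have hy0 : g 0 ≤ y := (hg ha.1).trans hay
    refine ⟨⟨(le_pseudoInv_iff hg hlc hT ha hy0).2 hay, lt_of_not_ge fun h => ?_⟩, hy0,
      hyb.trans_le (hg hb.2)⟩
    exact hyb.not_ge ((le_pseudoInv_iff hg hlc hT hb hy0).1 h)

theorem pseudoInv_apply (hg : Monotone g) (hlc : ∀ t, ContinuousWithinAt g (Iio t) t)
    (hT : 0 ≤ T) {t : ℝ} (ht : t ∈ Icc 0 T) (hright : ∀ s, t < s → g t < g s) :
    pseudoInv g T (g t) = t := by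
  refine le_antisymm (not_lt.1 fun h => ?_) (le_pseudoInv ht le_rfl)
  exact (hright _ h).not_ge (apply_pseudoInv_le hg hlc hT (hg ht.1))

theorem apply_pseudoInv_of_notMem_DSet (hg : Monotone g)
    (hlc : ∀ t, ContinuousWithinAt g (Iio t) t) (hT : 0 ≤ T) {y : ℝ}
    (hy : y ∈ Ico (g 0) (g T)) (hD : pseudoInv g T y ∉ DSet g) : g (pseudoInv g T y) = y := by
  set t := pseudoInv g T y
  refine (apply_pseudoInv_le hg hlc hT hy.1).antisymm (le_trans ?_ (not_lt.1 hD))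
  refine ge_of_tendsto (hg.tendsto_rightLim t) ?_
  filter_upwards [Ioc_mem_nhdsGT (mapsTo_pseudoInv hg hlc hT hy).2] with s hs
  exact le_of_lt <| lt_of_not_ge fun h =>
    hs.1.not_ge ((le_pseudoInv_iff hg hlc hT ⟨(pseudoInv_mem_Icc hT hy.1).1.trans hs.1.le, hs.2⟩
      hy.1).2 h)

theorem map_pseudoInv_volume (hg : Monotone g) (hlc : ∀ t, ContinuousWithinAt g (Iio t) t)
    (hT : 0 ≤ T) {μ : Measure ℝ}
    (hμ : ∀ a b : ℝ, a ≤ b → μ (Ico a b) = ENNReal.ofReal (g b - g a)) :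
    (volume.restrict (Ico (g 0) (g T))).map (pseudoInv g T) = μ.restrict (Ico 0 T) := by
  have hφ : Measurable (pseudoInv g T) := (monotone_pseudoInv g T).measurable
  have : IsFiniteMeasure (volume.restrict (Ico (g 0) (g T))) := by
    rw [isFiniteMeasure_restrict, Real.volume_Ico]; exact ENNReal.ofReal_ne_top
  refine Measure.ext_of_Ico_finite _ _ ?_ fun a b _ => ?_
  · rw [Measure.map_apply hφ .univ, preimage_univ, Measure.restrict_apply_univ,
      Measure.restrict_apply_univ, Real.volume_Ico, hμ 0 T hT]
  rw [Measure.map_apply hφ measurableSet_Ico, Measure.restrict_apply (hφ measurableSet_Ico),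
    Measure.restrict_apply measurableSet_Ico, Ico_inter_Ico]
  have hclamp : pseudoInv g T ⁻¹' Ico a b ∩ Ico (g 0) (g T)
      = pseudoInv g T ⁻¹' Ico (max a 0) (min b T) ∩ Ico (g 0) (g T) := by
    rw [← Ico_inter_Ico, preimage_inter, inter_assoc,
      inter_eq_right.2 (mapsTo_pseudoInv hg hlc hT).subset_preimage]
  rw [hclamp]
  rcases lt_or_ge (max a 0) (min b T) with hlt | hge
  · have ha : max a 0 ∈ Icc 0 T := ⟨le_max_right _ _, hlt.le.trans (min_le_right _ _)⟩
    have hb : min b T ∈ Icc 0 T := ⟨(le_max_right _ _).trans hlt.le, min_le_right _ _⟩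
    rw [preimage_pseudoInv_Ico hg hlc hT ha hb, Real.volume_Ico, hμ _ _ hlt.le]
  · rw [Ico_eq_empty hge.not_gt, preimage_empty, empty_inter, measure_empty, measure_empty]

theorem integrable_indicator_comp_pseudoInv (hg : Monotone g)
    (hlc : ∀ t, ContinuousWithinAt g (Iio t) t) (hT : 0 ≤ T) {μ : Measure ℝ}
    (hμ : ∀ a b : ℝ, a ≤ b → μ (Ico a b) = ENNReal.ofReal (g b - g a))
    {V : Type*} [NormedAddCommGroup V] {f : ℝ → V} (hf : IntegrableOn f (Ico 0 T) μ) :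
    Integrable ((Ico (g 0) (g T)).indicator (f ∘ pseudoInv g T)) := by
  rw [integrable_indicator_iff measurableSet_Ico, IntegrableOn,
    ← integrable_map_measure _ (monotone_pseudoInv g T).measurable.aemeasurable,
    map_pseudoInv_volume hg hlc hT hμ]
  · exact hf
  · rw [map_pseudoInv_volume hg hlc hT hμ]
    exact hf.aestronglyMeasurable

theorem setIntegral_Ico_eq_setIntegral_pseudoInv (hg : Monotone g)
    (hlc : ∀ t, ContinuousWithinAt g (Iio t) t) (hT : 0 ≤ T) {μ : Measure ℝ}
    (hμ : ∀ a b : ℝ, a ≤ b → μ (Ico a b) = ENNReal.ofReal (g b - g a))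
    {V : Type*} [NormedAddCommGroup V] [NormedSpace ℝ V] {f : ℝ → V}
    (hf : AEStronglyMeasurable f (μ.restrict (Ico 0 T))) {t s : ℝ} (ht : 0 ≤ t) (hts : t ≤ s)
    (hs : s ≤ T) :
    ∫ x in Ico t s, f x ∂μ =
      ∫ y in Ico (g t) (g s), (Ico (g 0) (g T)).indicator (f ∘ pseudoInv g T) y := by
  have hφ : Measurable (pseudoInv g T) := (monotone_pseudoInv g T).measurable
  have hsub : Ico t s ⊆ Ico 0 T := Ico_subset_Ico ht hs
  have hf' : AEStronglyMeasurable f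
      ((volume.restrict (Ico (g 0) (g T))).map (pseudoInv g T)) := by
    rwa [map_pseudoInv_volume hg hlc hT hμ]
  calc ∫ x in Ico t s, f x ∂μ = ∫ x in Ico t s, f x ∂(μ.restrict (Ico 0 T)) := by
        rw [Measure.restrict_restrict measurableSet_Ico, inter_eq_self_of_subset_left hsub]
    _ = ∫ y in pseudoInv g T ⁻¹' Ico t s ∩ Ico (g 0) (g T), f (pseudoInv g T y) := by
        rw [← map_pseudoInv_volume hg hlc hT hμ, setIntegral_map measurableSet_Ico hf'
          hφ.aemeasurable, Measure.restrict_restrict (hφ measurableSet_Ico)]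
    _ = _ := by
        rw [setIntegral_indicator measurableSet_Ico, preimage_pseudoInv_Ico hg hlc hT
          ⟨ht, hts.trans hs⟩ ⟨ht.trans hts, hs⟩, inter_eq_self_of_subset_left
          (Ico_subset_Ico (hg ht) (hg hs))]
        rfl

theorem measure_diff_DSet_inter_preimage_eq_zero (hg : Monotone g)
    (hlc : ∀ t, ContinuousWithinAt g (Iio t) t) (hT : 0 ≤ T) {μ : Measure ℝ}
    (hμ : ∀ a b : ℝ, a ≤ b → μ (Ico a b) = ENNReal.ofReal (g b - g a)) {E : Set ℝ}
    (hE : MeasurableSet E) (hE0 : volume E = 0) :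
    μ ((Ico 0 T \ DSet g) ∩ g ⁻¹' E) = 0 := by
  have hφ : Measurable (pseudoInv g T) := (monotone_pseudoInv g T).measurable
  have hA : MeasurableSet ((Ico 0 T \ DSet g) ∩ g ⁻¹' E) :=
    (measurableSet_Ico.diff hg.countable_DSet.measurableSet).inter (hg.measurable hE)
  rw [← inter_eq_self_of_subset_left (inter_subset_left.trans sdiff_subset : _ ⊆ Ico 0 T),
    ← Measure.restrict_apply hA, ← map_pseudoInv_volume hg hlc hT hμ, Measure.map_apply hφ hA,
    Measure.restrict_apply (hφ hA)]
  refine measure_mono_null (fun y ⟨hy, hyI⟩ => ?_) hE0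
  rw [← apply_pseudoInv_of_notMem_DSet hg hlc hT hyI hy.1.2]
  exact hy.2

end PseudoInverse

section GDerivative

variable {V : Type*} [NormedAddCommGroup V] [NormedSpace ℝ V] {g : ℝ → ℝ}

theorem hasDerivG_of_mem_DSet [CompleteSpace V] (hg : Monotone g) {μ : Measure ℝ}
    (hμ : ∀ a b : ℝ, a ≤ b → μ (Ico a b) = ENNReal.ofReal (g b - g a)) {T : ℝ}
    {f F : ℝ → V} (hf : IntegrableOn f (Icc 0 T) μ)
    (hF : ∀ t ∈ Icc 0 T, F t = ∫ s in Ico 0 t, f s ∂μ)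
    {t : ℝ} (ht : t ∈ Icc 0 T) (hjump : t ∈ DSet g) :
    HasDerivG g (Icc 0 T) F t (f t) := by
  have hjump' : g t < Function.rightLim g t := hjump
  have hμt : μ.real {t} = Function.rightLim g t - g t := by
    rw [measureReal_def, hg.measure_singleton hμ, ENNReal.toReal_ofReal (sub_pos.2 hjump').le]
  rw [HasDerivG, if_pos hjump']
  refine ⟨F t + μ.real {t} • f t, ?_, ?_⟩
  · rcases ht.2.lt_or_eq with htT | rfl
    · have hlim := (tendsto_setIntegral_Ico_nhdsGT htT
        (hf.mono_set (Ico_subset_Icc_self.trans (Icc_subset_Icc_left ht.1)))).const_add (F t)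
      refine (hlim.mono_left (nhdsWithin_mono _ inter_subset_right)).congr' ?_
      filter_upwards [self_mem_nhdsWithin] with s hs
      rw [← sub_eq_setIntegral_Ico hf hF ht.1 hs.2.le hs.1.2, add_sub_cancel]
    · rw [show Icc 0 t ∩ Ioi t = ∅ from
          eq_empty_of_forall_notMem fun x hx => hx.2.not_ge hx.1.2,
        nhdsWithin_empty]
      exact tendsto_bot
  · rw [add_sub_cancel_left, smul_smul, hμt, inv_mul_cancel₀ (sub_pos.2 hjump').ne', one_smul]

theorem Monotone.lt_of_apply_notMem_range_rat (hg : Monotone g) {t : ℝ}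
    (ht : g t ∉ range fun q : ℚ => g q) :
    (∀ s < t, g s < g t) ∧ ∀ s, t < s → g t < g s := by
  refine ⟨fun s hst => lt_of_not_ge fun h => ?_, fun s hts => lt_of_not_ge fun h => ?_⟩
  · obtain ⟨q, hsq, hqt⟩ := exists_rat_btwn hst
    exact ht ⟨q, le_antisymm (hg hqt.le) (h.trans (hg hsq.le))⟩
  · obtain ⟨q, htq, hqs⟩ := exists_rat_btwn hts
    exact ht ⟨q, le_antisymm ((hg hqs.le).trans h) (hg htq.le)⟩

theorem hasDerivG_of_isIntervalLebesguePoint (hg : Monotone g)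
    (hlc : ∀ t, ContinuousWithinAt g (Iio t) t) {A : Set ℝ} {F H : ℝ → V} {t : ℝ}
    (hFH : ∀ u ∈ A, ∀ s ∈ A, u ≤ s → F s - F u = ∫ y in Ico (g u) (g s), H y)
    (ht : t ∈ A) (hD : t ∉ DSet g) (hleft : ∀ s < t, g s < g t)
    (hright : ∀ s, t < s → g t < g s) (hH : IsIntervalLebesguePoint H (g t)) :
    HasDerivG g A F t (H (g t)) := by
  have hcont : Function.rightLim g t = g t := le_antisymm (not_lt.1 hD) (hg.le_rightLim le_rfl)
  rw [HasDerivG, if_neg (show ¬g t < _ from hD), sdiff_eq, ← Iio_union_Ioi,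
    inter_union_distrib_left, nhdsWithin_union, tendsto_sup]
  constructor
  · have hlen : Tendsto (fun s => g t - g s) (𝓝[A ∩ Iio t] t) (𝓝[>] 0) :=
      tendsto_nhdsWithin_iff.2 ⟨by simpa using ((hlc t).mono_left
        (nhdsWithin_mono _ inter_subset_right)).const_sub (g t),
        eventually_nhdsWithin_of_forall fun s hs => sub_pos.2 (hleft s hs.2)⟩
    refine (hH _ g (fun _ => g t) hlen (eventually_nhdsWithin_of_forall fun s hs =>
      ⟨hg hs.2.le, le_rfl⟩)).congr' (eventually_nhdsWithin_of_forall fun s hs => ?_)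
    rw [← hFH s hs.1 t ht hs.2.le, ← neg_sub (F s), ← neg_sub (g s), inv_neg, neg_smul_neg]
  · have hlen : Tendsto (fun s => g s - g t) (𝓝[A ∩ Ioi t] t) (𝓝[>] 0) :=
      tendsto_nhdsWithin_iff.2 ⟨by simpa [hcont] using ((hg.tendsto_rightLim t).mono_left
        (nhdsWithin_mono _ inter_subset_right)).sub_const (g t),
        eventually_nhdsWithin_of_forall fun s hs => sub_pos.2 (hright s hs.2)⟩
    refine (hH _ (fun _ => g t) g hlen (eventually_nhdsWithin_of_forall fun s hs =>
      ⟨le_rfl, hg hs.2.le⟩)).congr' (eventually_nhdsWithin_of_forall fun s hs => ?_)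
    rw [← hFH t ht s hs.1 hs.2.le]

theorem hasDerivG_of_notMem_DSet (hg : Monotone g) (hlc : ∀ t, ContinuousWithinAt g (Iio t) t)
    {T : ℝ} (hT : 0 ≤ T) {μ : Measure ℝ}
    (hμ : ∀ a b : ℝ, a ≤ b → μ (Ico a b) = ENNReal.ofReal (g b - g a)) {f F : ℝ → V}
    (hf : IntegrableOn f (Icc 0 T) μ) (hF : ∀ t ∈ Icc 0 T, F t = ∫ s in Ico 0 t, f s ∂μ)
    {t : ℝ} (ht : t ∈ Ico 0 T) (hD : t ∉ DSet g) (hrat : g t ∉ range fun q : ℚ => g q)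
    (hleb : IsIntervalLebesguePoint ((Ico (g 0) (g T)).indicator (f ∘ pseudoInv g T)) (g t)) :
    HasDerivG g (Icc 0 T) F t (f t) := by
  obtain ⟨hleft, hright⟩ := hg.lt_of_apply_notMem_range_rat hrat
  have hcomp : (Ico (g 0) (g T)).indicator (f ∘ pseudoInv g T) (g t) = f t := by
    rw [indicator_of_mem (show g t ∈ Ico (g 0) (g T) from ⟨hg ht.1, hright T ht.2⟩),
      Function.comp_apply, pseudoInv_apply hg hlc hT (Ico_subset_Icc_self ht) hright]
  rw [← hcomp]
  refine hasDerivG_of_isIntervalLebesguePoint hg hlc (fun u hu s hs hus => ?_)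
    (Ico_subset_Icc_self ht) hD hleft hright hleb
  rw [sub_eq_setIntegral_Ico hf hF hu.1 hus hs.2, setIntegral_Ico_eq_setIntegral_pseudoInv hg hlc
    hT hμ (hf.mono_set Ico_subset_Icc_self).aestronglyMeasurable hu.1 hus hs.2]

end GDerivative

theorem stmt1_general
    {V : Type*} [NormedAddCommGroup V] [NormedSpace ℝ V] [CompleteSpace V]
    (g : ℝ → ℝ) (hg : Monotone g)
    (hlc : ∀ t : ℝ, ContinuousWithinAt g (Set.Iio t) t)
    (μ : Measure ℝ)
    (hμ : ∀ a b : ℝ, a ≤ b → μ (Set.Ico a b) = ENNReal.ofReal (g b - g a))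
    (T : ℝ) (hT : 0 ≤ T)
    (f : ℝ → V) (hf : IntegrableOn f (Set.Icc 0 T) μ)
    (F : ℝ → V) (hF : ∀ t ∈ Set.Icc 0 T, F t = ∫ s in Set.Ico 0 t, f s ∂μ) :
    ∃ N ⊆ Set.Icc 0 T, MeasurableSet N ∧ μ N = 0 ∧
      ∀ t ∈ Set.Icc 0 T \ N, HasDerivG g (Set.Icc 0 T) F t (f t) := by
  have hf₀ : IntegrableOn f (Ico 0 T) μ := hf.mono_set Ico_subset_Icc_self
  obtain ⟨B, hB, hBmeas, hB0⟩ := exists_measurable_superset_of_null <| ae_iff.1 <|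
    ae_isIntervalLebesguePoint
      (integrable_indicator_comp_pseudoInv hg hlc hT hμ hf₀).locallyIntegrable
  set E := B ∪ range fun q : ℚ => g q
  have hEmeas : MeasurableSet E := hBmeas.union (countable_range _).measurableSet
  have hE0 : volume E = 0 := measure_union_null hB0 ((countable_range _).measure_zero _)
  refine ⟨({T} \ DSet g) ∪ ((Ico 0 T \ DSet g) ∩ g ⁻¹' E), ?_, ?_, ?_, ?_⟩
  · exact union_subset (sdiff_subset.trans (singleton_subset_iff.2 ⟨hT, le_rfl⟩))
      (inter_subset_left.trans (sdiff_subset.trans Ico_subset_Icc_self))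
  · exact ((measurableSet_singleton T).diff hg.countable_DSet.measurableSet).union
      ((measurableSet_Ico.diff hg.countable_DSet.measurableSet).inter (hg.measurable hEmeas))
  · exact measure_union_null (hg.measure_singleton_diff_DSet hμ T)
      (measure_diff_DSet_inter_preimage_eq_zero hg hlc hT hμ hEmeas hE0)
  rintro t ⟨ht, htN⟩
  by_cases hjump : t ∈ DSet g
  · exact hasDerivG_of_mem_DSet hg hμ hf hF ht hjump
  have htT : t < T := ht.2.lt_of_ne fun h => htN (Or.inl ⟨h, hjump⟩)
  have htE : g t ∉ E := fun h => htN (Or.inr ⟨⟨⟨ht.1, htT⟩, hjump⟩, h⟩)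
  exact hasDerivG_of_notMem_DSet hg hlc hT hμ hf hF ⟨ht.1, htT⟩ hjump
    (fun h => htE (Or.inr h)) (not_not.1 fun h => htE (Or.inl (hB h)))

/-- Generalized Lebesgue differentiation theorem for finite rank Bochner
`μ_g`-integrable functions. -/
theorem stmt1
    {V : Type*} [NormedAddCommGroup V] [NormedSpace ℝ V] [CompleteSpace V]
    (g : ℝ → ℝ) (hg : Monotone g)
    (hlc : ∀ t : ℝ, ContinuousWithinAt g (Set.Iio t) t)
    (μ : Measure ℝ)
    (hμ : ∀ a b : ℝ, a ≤ b → μ (Set.Ico a b) = ENNReal.ofReal (g b - g a))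
    (T : ℝ) (hT : 0 ≤ T)
    (f : ℝ → V) (hf : IntegrableOn f (Set.Icc 0 T) μ)
    (hrank : ∃ S : Submodule ℝ V, FiniteDimensional ℝ S ∧ ∀ t ∈ Set.Icc 0 T, f t ∈ S)
    (F : ℝ → V) (hF : ∀ t ∈ Set.Icc 0 T, F t = ∫ s in Set.Ico 0 t, f s ∂μ) :
    ∃ N ⊆ Set.Icc 0 T, MeasurableSet N ∧ μ N = 0 ∧
      ∀ t ∈ Set.Icc 0 T \ N, HasDerivG g (Set.Icc 0 T) F t (f t) :=
  stmt1_general g hg hlc μ hμ T hT f hf F hF
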